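/- arXiv:math/0109196 — 4 statements merged into one kernel-verified Lean document; each statement's English description precedes it below -/
import Mathlib

section
/- Let H and H' be finite-dimensional Hopf algebras over ℂ with bijective antipodes, and let f : H' → H be an injective bialgebra homomorphism (so H' is identified with a Hopf subalgebra of H). If a positive integer n satisfies the quasi-exponent condition for H, then n satisfies the quasi-exponent condition for H'. In particular, the quasi-exponent of a Hopf subalgebra of H divides qexp(H). -/
/-!
Let `g = S⁻²`. Since the antipode is anti-comultiplicative, `g` is a coalgebra endomorphism, so
precomposition with `g` distributes over convolution and `T_{k+1} = T_k ⋆ g^k` can be rewritten as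
`T_{k+1} = id ⋆ (T_k ∘ g)`. Hence `T_k = Φᵏ T₀` for the linear operator `Φ x = id ⋆ (x ∘ g)`,
and the quasi-exponent condition for `n` says that `(1 - Φⁿ)ᴺ T₀ = 0` for some `N > 0`, i.e. that
`Xⁿ = 1` in the quotient of `ℂ[X]` by the radical of the annihilator of `T₀`. The admissible `n`
are therefore the multiples of the order of `X` in that quotient, and the least of them divides
all the others.

An injective bialgebra map `f : H' → H` commutes with the antipodes, hence with their inverses and
with every `T_k`, so each relation `∑ (-1)ᵏ (N choose k) T_{nk} = 0` in `H` pulls back to `H'`.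
-/

open TensorProduct

/-- The maps `T_n : H → H`: `T_0 = ι ∘ ε`, and `T_{n+1} = m ∘ (T_n ⊗ S^{-2n}) ∘ Δ`, i.e.
`T_n = m_n ∘ (Id ⊗ S⁻² ⊗ S⁻⁴ ⊗ ⋯ ⊗ S^{-2n+2}) ∘ Δ_n` where `m_n = m ∘ (m_{n-1} ⊗ Id)` and
`Δ_n = (Δ_{n-1} ⊗ Id) ∘ Δ`.  Here `Sinv` is the inverse of the antipode. -/
noncomputable def qeT (H : Type*) [Ring H] [Bialgebra ℂ H] (Sinv : H →ₗ[ℂ] H) :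
    ℕ → (H →ₗ[ℂ] H)
  | 0 => Algebra.linearMap ℂ H ∘ₗ Coalgebra.counit
  | n + 1 =>
      LinearMap.mul' ℂ H ∘ₗ TensorProduct.map (qeT H Sinv n) ((Sinv ∘ₗ Sinv) ^ n)
        ∘ₗ Coalgebra.comul

/-- A positive integer `n` satisfies the quasi-exponent condition for `H` if
`∑_{k=0}^N (-1)^k (N choose k) T_{nk} = 0` for some positive integer `N`. -/
noncomputable def qexpCond (H : Type*) [Ring H] [Bialgebra ℂ H] (Sinv : H →ₗ[ℂ] H)
    (n : ℕ) : Prop :=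
  ∃ N : ℕ, 0 < N ∧
    ∑ k ∈ Finset.range (N + 1), ((-1 : ℂ) ^ k * (N.choose k : ℂ)) • qeT H Sinv (n * k) = 0

open Coalgebra WithConv HopfAlgebra
open scoped RingTheory.LinearMap

namespace HopfAlgebra

variable {R H : Type*} [CommSemiring R] [Semiring H] [HopfAlgebra R H]

lemma toConv_antipode_tensor_comm_comul_mul_comul :
    toConv ((antipode R ⊗ₘ antipode R) ∘ₗ (TensorProduct.comm R H H).toLinearMap ∘ₗ δ) *
      toConv (δ : H →ₗ[R] H ⊗[R] H) = 1 := by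
  apply WithConv.ext
  simp only [LinearMap.convMul_def, LinearMap.convOne_def, ofConv_toConv]
  -- In Sweedler notation the product is `S a₍₂₎ a₍₃₎ ⊗ S a₍₁₎ a₍₄₎`; contract the middle pair.
  calc
    _ = (LinearMap.lTensor H (LinearMap.mul' R H) ∘ₗ
          (TensorProduct.leftComm R H H H).toLinearMap ∘ₗ
          LinearMap.rTensor (H ⊗[R] H) (antipode R)) ∘ₗ
        LinearMap.lTensor H
          (LinearMap.rTensor H (LinearMap.mul' R H ∘ₗ LinearMap.rTensor H (antipode R) ∘ₗ δ)) ∘ₗ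
        LinearMap.lTensor H (δ : H →ₗ[R] H ⊗[R] H) ∘ₗ δ := by
      simp only [coassoc_simps, LinearMap.mul'_tensor]
    _ = TensorProduct.mk R H H 1 ∘ₗ Algebra.linearMap R H ∘ₗ ε := by
      rw [mul_antipode_rTensor_comul, LinearMap.rTensor_comp, LinearMap.lTensor_comp]
      simp only [LinearMap.comp_assoc]
      rw [← LinearMap.comp_assoc δ (LinearMap.lTensor H δ), ← LinearMap.lTensor_comp,
        rTensor_counit_comp_comul, ← mul_antipode_rTensor_comul]
      simp only [← LinearMap.comp_assoc]
      congr 1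
      ext a b
      simp
    _ = _ := by
      ext a
      simp [Algebra.algebraMap_eq_smul_one, Algebra.TensorProduct.one_def, smul_tmul']

theorem comul_comp_antipode :
    δ ∘ₗ antipode R =
      (antipode R ⊗ₘ antipode R) ∘ₗ (TensorProduct.comm R H H).toLinearMap ∘ₗ
        (δ : H →ₗ[R] H ⊗[R] H) :=
  congrArg ofConv <| .symm <|
    left_inv_eq_right_inv toConv_antipode_tensor_comm_comul_mul_comul LinearMap.comul_right_inv

variable {ψ : H →ₗ[R] H}

lemma comul_comp_eq_of_antipode_inverse (h₁ : ψ ∘ₗ antipode R = .id)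
    (h₂ : antipode R ∘ₗ ψ = .id) :
    δ ∘ₗ ψ = (ψ ⊗ₘ ψ) ∘ₗ (TensorProduct.comm R H H).toLinearMap ∘ₗ δ := by
  calc
    δ ∘ₗ ψ = (ψ ⊗ₘ ψ) ∘ₗ (antipode R ⊗ₘ antipode R) ∘ₗ δ ∘ₗ ψ := by
      rw [← LinearMap.comp_assoc, ← TensorProduct.map_comp, h₁, map_id, LinearMap.id_comp]
    _ = (ψ ⊗ₘ ψ) ∘ₗ (TensorProduct.comm R H H).toLinearMap ∘ₗ (δ ∘ₗ antipode R) ∘ₗ ψ := by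
      rw [comul_comp_antipode]
      ext x
      simp [map_comm]
    _ = (ψ ⊗ₘ ψ) ∘ₗ (TensorProduct.comm R H H).toLinearMap ∘ₗ δ := by
      rw [LinearMap.comp_assoc, h₂, LinearMap.comp_id]

lemma counit_comp_eq_of_antipode_inverse (h₂ : antipode R ∘ₗ ψ = .id) :
    ε ∘ₗ ψ = (ε : H →ₗ[R] R) :=
  calc
    ε ∘ₗ ψ = (ε ∘ₗ antipode R) ∘ₗ ψ := by rw [counit_comp_antipode]
    _ = ε := by rw [LinearMap.comp_assoc, h₂, LinearMap.comp_id]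

def antipodeInvSqCoalgHom (h₁ : ψ ∘ₗ antipode R = .id) (h₂ : antipode R ∘ₗ ψ = .id) :
    H →ₗc[R] H where
  toLinearMap := ψ ∘ₗ ψ
  counit_comp := by
    rw [← LinearMap.comp_assoc, counit_comp_eq_of_antipode_inverse h₂,
      counit_comp_eq_of_antipode_inverse h₂]
  map_comp_comul := by
    rw [← LinearMap.comp_assoc, comul_comp_eq_of_antipode_inverse h₁ h₂]
    simp only [LinearMap.comp_assoc]
    rw [comul_comp_eq_of_antipode_inverse h₁ h₂]
    ext
    simp [map_comm, map_map]

end HopfAlgebra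

namespace BialgHom

variable {R H H' : Type*} [CommSemiring R] [Semiring H] [HopfAlgebra R H] [Semiring H']
  [HopfAlgebra R H'] (f : H' →ₐc[R] H)

theorem comp_antipode : (f : H' →ₗ[R] H) ∘ₗ antipode R = antipode R ∘ₗ (f : H' →ₗ[R] H) := by
  have hleft : toConv ((f : H' →ₗ[R] H) ∘ₗ antipode R) * toConv (f : H' →ₗ[R] H) = 1 := by
    have := LinearMap.algHom_comp_convMul_distrib (f : H' →ₐ[R] H) (toConv (antipode R))
      (toConv .id)
    rw [LinearMap.antipode_mul_id, LinearMap.algHom_comp_convOne] at this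
    exact ofConv_injective this.symm
  have hright : toConv (f : H' →ₗ[R] H) * toConv (antipode R ∘ₗ (f : H' →ₗ[R] H)) = 1 := by
    have := LinearMap.convMul_comp_coalgHom_distrib (toConv .id) (toConv (antipode R))
      (f : H' →ₗc[R] H)
    rw [LinearMap.id_mul_antipode, LinearMap.convOne_comp_coalgHom] at this
    exact ofConv_injective this.symm
  exact congrArg ofConv (left_inv_eq_right_inv hleft hright)

theorem comp_eq_of_antipode_inverse {ψ : H →ₗ[R] H} {ψ' : H' →ₗ[R] H'}
    (hψ : ψ ∘ₗ antipode R = .id) (hψ' : antipode R ∘ₗ ψ' = .id) :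
    (f : H' →ₗ[R] H) ∘ₗ ψ' = ψ ∘ₗ (f : H' →ₗ[R] H) :=
  calc
    (f : H' →ₗ[R] H) ∘ₗ ψ' = ψ ∘ₗ (antipode R ∘ₗ (f : H' →ₗ[R] H)) ∘ₗ ψ' := by
      rw [← LinearMap.comp_assoc ψ', ← LinearMap.comp_assoc, hψ, LinearMap.id_comp]
    _ = ψ ∘ₗ (f : H' →ₗ[R] H) := by
      rw [← comp_antipode, LinearMap.comp_assoc, hψ', LinearMap.comp_id]

end BialgHom

lemma one_sub_pow_eq_sum {R A : Type*} [CommRing R] [Ring A] [Algebra R A] (a : A) (N : ℕ) :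
    (1 - a) ^ N = ∑ k ∈ Finset.range (N + 1), ((-1 : R) ^ k * N.choose k) • a ^ k := by
  rw [← neg_add_eq_sub, (Commute.one_right (-a)).add_pow]
  refine Finset.sum_congr rfl fun k _ => ?_
  rw [one_pow, mul_one, neg_pow, mul_smul, Nat.cast_smul_eq_nsmul, nsmul_eq_mul', Algebra.smul_def,
    map_pow, map_neg, map_one, mul_assoc]

lemma orderOf_eq_sInf {G : Type*} [Monoid G] (x : G) :
    orderOf x = sInf {n | 0 < n ∧ x ^ n = 1} := by
  rw [orderOf, Function.minimalPeriod_eq_sInf_n_pos_IsPeriodicPt]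
  simp [isPeriodicPt_mul_iff_pow_eq_one]

namespace Module.End

open Polynomial

variable {R M : Type*} [CommRing R] [AddCommGroup M] [Module R M] (φ : Module.End R M) (v : M)

def IsUnipotentAt : Prop :=
  ∃ N, 0 < N ∧ ((1 - φ) ^ N) v = 0

def annihilatorAt : Ideal R[X] where
  carrier := {p | aeval φ p v = 0}
  add_mem' hp hq := by simp_all
  zero_mem' := by simp
  smul_mem' c p hp := by simp_all

@[simp]
lemma mem_annihilatorAt {p : R[X]} : p ∈ annihilatorAt φ v ↔ aeval φ p v = 0 := Iff.rfl

lemma isUnipotentAt_pow_iff (n : ℕ) :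
    (φ ^ n).IsUnipotentAt v ↔ Ideal.Quotient.mk (annihilatorAt φ v).radical X ^ n = 1 := by
  rw [← map_pow, ← map_one (Ideal.Quotient.mk _), eq_comm, Ideal.Quotient.eq,
    Ideal.mem_radical_iff]
  simp only [mem_annihilatorAt, map_pow, map_sub, map_one, aeval_X]
  constructor
  · rintro ⟨N, -, hN⟩
    exact ⟨N, hN⟩
  · rintro ⟨N, hN⟩
    exact ⟨N + 1, N.succ_pos, by rw [pow_succ', Module.End.mul_apply, hN, map_zero]⟩

theorem sInf_isUnipotentAt_pow_dvd {a : ℕ} (ha : (φ ^ a).IsUnipotentAt v) :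
    sInf {m | 0 < m ∧ (φ ^ m).IsUnipotentAt v} ∣ a := by
  simp only [isUnipotentAt_pow_iff] at ha ⊢
  rw [← orderOf_eq_sInf]
  exact orderOf_dvd_of_pow_eq_one ha

end Module.End

section ConvIdComp

variable {R H : Type*} [CommSemiring R] [Semiring H] [Bialgebra R H]

noncomputable def convIdComp (g : H →ₗc[R] H) : Module.End R (H →ₗ[R] H) where
  toFun x := (toConv (LinearMap.id : H →ₗ[R] H) * toConv (x ∘ₗ (g : H →ₗ[R] H))).ofConv
  map_add' x y := by simp [LinearMap.add_comp, mul_add]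
  map_smul' c x := by simp [LinearMap.smul_comp]

lemma toConv_convIdComp (g : H →ₗc[R] H) (x : H →ₗ[R] H) :
    toConv (convIdComp g x) = toConv LinearMap.id * toConv (x ∘ₗ (g : H →ₗ[R] H)) := rfl

end ConvIdComp

section QuasiExponent

variable {H H' : Type*} [Ring H] [Bialgebra ℂ H] [Ring H'] [Bialgebra ℂ H']

lemma toConv_qeT_zero (Sinv : H →ₗ[ℂ] H) : toConv (qeT H Sinv 0) = 1 := rfl

lemma toConv_qeT_succ (Sinv : H →ₗ[ℂ] H) (k : ℕ) :
    toConv (qeT H Sinv (k + 1)) = toConv (qeT H Sinv k) * toConv ((Sinv ∘ₗ Sinv) ^ k) := rfl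

theorem BialgHom.comp_qeT (f : H' →ₐc[ℂ] H) {Sinv : H →ₗ[ℂ] H} {Sinv' : H' →ₗ[ℂ] H'}
    (hf : (f : H' →ₗ[ℂ] H) ∘ₗ Sinv' = Sinv ∘ₗ (f : H' →ₗ[ℂ] H)) (k : ℕ) :
    (f : H' →ₗ[ℂ] H) ∘ₗ qeT H' Sinv' k = qeT H Sinv k ∘ₗ (f : H' →ₗ[ℂ] H) := by
  induction k with
  | zero =>
    ext x
    simp [qeT, AlgHomClass.commutes]
  | succ k ih =>
    have hpow : (f : H' →ₗ[ℂ] H) ∘ₗ (Sinv' ∘ₗ Sinv') ^ k =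
        ((Sinv ∘ₗ Sinv) ^ k) ∘ₗ (f : H' →ₗ[ℂ] H) :=
      (Module.End.commute_pow_left_of_commute (by
        rw [LinearMap.comp_assoc, ← hf, ← LinearMap.comp_assoc, ← hf, LinearMap.comp_assoc]) k).symm
    calc (f : H' →ₗ[ℂ] H) ∘ₗ qeT H' Sinv' (k + 1)
        = (toConv ((f : H' →ₗ[ℂ] H) ∘ₗ qeT H' Sinv' k) *
            toConv ((f : H' →ₗ[ℂ] H) ∘ₗ (Sinv' ∘ₗ Sinv') ^ k)).ofConv :=
          LinearMap.algHom_comp_convMul_distrib (f : H' →ₐ[ℂ] H) _ _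
      _ = (toConv (qeT H Sinv k ∘ₗ (f : H' →ₗ[ℂ] H)) *
            toConv (((Sinv ∘ₗ Sinv) ^ k) ∘ₗ (f : H' →ₗ[ℂ] H))).ofConv := by
          rw [ih, hpow]
      _ = qeT H Sinv (k + 1) ∘ₗ (f : H' →ₗ[ℂ] H) :=
          (LinearMap.convMul_comp_coalgHom_distrib _ _ (f : H' →ₗc[ℂ] H)).symm

theorem qexpCond_of_injective (f : H' →ₐc[ℂ] H) (hf : Function.Injective f)
    {Sinv : H →ₗ[ℂ] H} {Sinv' : H' →ₗ[ℂ] H'}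
    (hfS : (f : H' →ₗ[ℂ] H) ∘ₗ Sinv' = Sinv ∘ₗ (f : H' →ₗ[ℂ] H)) {n : ℕ}
    (h : qexpCond H Sinv n) : qexpCond H' Sinv' n := by
  obtain ⟨N, hN, hsum⟩ := h
  refine ⟨N, hN, LinearMap.ext fun x => hf ?_⟩
  have hx (k : ℕ) : f (qeT H' Sinv' k x) = qeT H Sinv k (f x) :=
    LinearMap.congr_fun (BialgHom.comp_qeT f hfS k) x
  simpa [map_sum, hx] using LinearMap.congr_fun hsum (f x)

variable {Sinv : H →ₗ[ℂ] H} (g : H →ₗc[ℂ] H)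

lemma qeT_succ_eq_convIdComp (hg : (g : H →ₗ[ℂ] H) = Sinv ∘ₗ Sinv) (k : ℕ) :
    qeT H Sinv (k + 1) = convIdComp g (qeT H Sinv k) := by
  apply toConv_injective
  induction k with
  | zero =>
    rw [toConv_convIdComp, toConv_qeT_succ, toConv_qeT_zero, pow_zero, Module.End.one_eq_id, qeT,
      LinearMap.comp_assoc, CoalgHomClass.counit_comp, ← LinearMap.convOne_def, one_mul, mul_one]
  | succ k ih =>
    have hshift : ((Sinv ∘ₗ Sinv) ^ k) ∘ₗ (g : H →ₗ[ℂ] H) = (Sinv ∘ₗ Sinv) ^ (k + 1) := by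
      rw [hg, pow_succ, Module.End.mul_eq_comp]
    have hcomp : toConv (qeT H Sinv (k + 1) ∘ₗ (g : H →ₗ[ℂ] H)) =
        toConv (qeT H Sinv k ∘ₗ (g : H →ₗ[ℂ] H)) * toConv ((Sinv ∘ₗ Sinv) ^ (k + 1)) := by
      rw [← hshift]
      exact congrArg toConv (LinearMap.convMul_comp_coalgHom_distrib _ _ g)
    rw [toConv_qeT_succ, ih, toConv_convIdComp, toConv_convIdComp, hcomp, mul_assoc]

lemma qeT_eq_pow_apply (hg : (g : H →ₗ[ℂ] H) = Sinv ∘ₗ Sinv) (k : ℕ) :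
    qeT H Sinv k = (convIdComp g ^ k) (qeT H Sinv 0) := by
  induction k with
  | zero => rfl
  | succ k ih => rw [qeT_succ_eq_convIdComp g hg, ih, pow_succ', Module.End.mul_apply]

lemma qexpCond_iff_isUnipotentAt (hg : (g : H →ₗ[ℂ] H) = Sinv ∘ₗ Sinv) (n : ℕ) :
    qexpCond H Sinv n ↔ (convIdComp g ^ n).IsUnipotentAt (qeT H Sinv 0) := by
  refine exists_congr fun N => and_congr_right fun _ => ?_
  rw [one_sub_pow_eq_sum (R := ℂ) (convIdComp g ^ n) N, LinearMap.sum_apply]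
  simp only [LinearMap.smul_apply, ← pow_mul, ← qeT_eq_pow_apply g hg]

end QuasiExponent

theorem qexpCond_of_hopfSubalgebra_general (H H' : Type*) [Ring H] [HopfAlgebra ℂ H]
    [Ring H'] [HopfAlgebra ℂ H']
    (Sinv : H →ₗ[ℂ] H)
    (hS₁ : Sinv ∘ₗ HopfAlgebra.antipode (R := ℂ) (A := H) = LinearMap.id)
    (Sinv' : H' →ₗ[ℂ] H')
    (hS₁' : Sinv' ∘ₗ HopfAlgebra.antipode (R := ℂ) (A := H') = LinearMap.id)
    (hS₂' : HopfAlgebra.antipode (R := ℂ) (A := H') ∘ₗ Sinv' = LinearMap.id)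
    (f : H' →ₐc[ℂ] H) (hf : Function.Injective f) :
    (∀ n : ℕ, 0 < n → qexpCond H Sinv n → qexpCond H' Sinv' n) ∧
      sInf {m : ℕ | 0 < m ∧ qexpCond H' Sinv' m} ∣
        sInf {m : ℕ | 0 < m ∧ qexpCond H Sinv m} := by
  have transfer (n : ℕ) : qexpCond H Sinv n → qexpCond H' Sinv' n :=
    qexpCond_of_injective f hf (f.comp_eq_of_antipode_inverse hS₁ hS₂')
  refine ⟨fun n _ => transfer n, ?_⟩
  obtain hempty | hne := Set.eq_empty_or_nonempty {m : ℕ | 0 < m ∧ qexpCond H Sinv m}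
  · rw [hempty, Nat.sInf_empty]
    exact dvd_zero _
  · have hiff := qexpCond_iff_isUnipotentAt (antipodeInvSqCoalgHom hS₁' hS₂') rfl
    simp only [hiff]
    exact Module.End.sInf_isUnipotentAt_pow_dvd _ _ ((hiff _).1 (transfer _ (Nat.sInf_mem hne).2))

/-- If `H'` is a Hopf subalgebra of a finite-dimensional Hopf algebra `H` over `ℂ` (with
bijective antipodes), i.e. there is an injective bialgebra homomorphism `f : H' → H`, then
every positive integer satisfying the quasi-exponent condition for `H` also satisfies it
for `H'`; in particular `qexp H'` divides `qexp H`. -/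
theorem qexpCond_of_hopfSubalgebra (H H' : Type*) [Ring H] [HopfAlgebra ℂ H]
    [FiniteDimensional ℂ H] [Ring H'] [HopfAlgebra ℂ H'] [FiniteDimensional ℂ H']
    (Sinv : H →ₗ[ℂ] H)
    (hS₁ : Sinv ∘ₗ HopfAlgebra.antipode (R := ℂ) (A := H) = LinearMap.id)
    (hS₂ : HopfAlgebra.antipode (R := ℂ) (A := H) ∘ₗ Sinv = LinearMap.id)
    (Sinv' : H' →ₗ[ℂ] H')
    (hS₁' : Sinv' ∘ₗ HopfAlgebra.antipode (R := ℂ) (A := H') = LinearMap.id)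
    (hS₂' : HopfAlgebra.antipode (R := ℂ) (A := H') ∘ₗ Sinv' = LinearMap.id)
    (f : H' →ₐc[ℂ] H) (hf : Function.Injective f) :
    (∀ n : ℕ, 0 < n → qexpCond H Sinv n → qexpCond H' Sinv' n) ∧
      sInf {m : ℕ | 0 < m ∧ qexpCond H' Sinv' m} ∣
        sInf {m : ℕ | 0 < m ∧ qexpCond H Sinv m} :=
  qexpCond_of_hopfSubalgebra_general H H' Sinv hS₁ Sinv' hS₁' hS₂' f hf
end

section
/- Let H be a finite-dimensional Hopf algebra over ℂ with bijective antipode, and let g ∈ H be a grouplike element. If a positive integer n satisfies the quasi-exponent condition for H, then g^n = 1. In particular, the order of every grouplike element of H divides qexp(H), and hence the exponent of the group G(H) of grouplike elements divides qexp(H). -/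
open TensorProduct

section auxiliary

open Polynomial

variable {H : Type*} [Ring H] [HopfAlgebra ℂ H]

/-- `x` is a grouplike element. -/
def QEGrouplike (x : H) : Prop :=
  Coalgebra.counit (R := ℂ) x = 1 ∧ Coalgebra.comul (R := ℂ) x = x ⊗ₜ[ℂ] x

lemma QE.antipode_mul {x : H} (hx : QEGrouplike x) :
    HopfAlgebra.antipode (R := ℂ) x * x = 1 := by
  have h := HopfAlgebra.mul_antipode_rTensor_comul_apply (R := ℂ) x
  rw [hx.2, hx.1] at h
  simpa using h

lemma QE.mul_antipode {x : H} (hx : QEGrouplike x) :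
    x * HopfAlgebra.antipode (R := ℂ) x = 1 := by
  have h := HopfAlgebra.mul_antipode_lTensor_comul_apply (R := ℂ) x
  rw [hx.2, hx.1] at h
  simpa using h

lemma QE.grouplike_antipode {x : H} (hx : QEGrouplike x) :
    QEGrouplike (HopfAlgebra.antipode (R := ℂ) x) := by
  constructor
  · have h : Coalgebra.counit (R := ℂ) (x * HopfAlgebra.antipode (R := ℂ) x) = 1 := by
      rw [QE.mul_antipode hx, Bialgebra.counit_one]
    rw [Bialgebra.counit_mul, hx.1, one_mul] at h
    exact h
  · have h : Coalgebra.comul (R := ℂ) (x * HopfAlgebra.antipode (R := ℂ) x) = 1 := by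
      rw [QE.mul_antipode hx, Bialgebra.comul_one]
    rw [Bialgebra.comul_mul, hx.2] at h
    set S := HopfAlgebra.antipode (R := ℂ) (A := H)
    calc Coalgebra.comul (R := ℂ) (S x)
        = ((S x ⊗ₜ[ℂ] S x) * (x ⊗ₜ[ℂ] x)) * Coalgebra.comul (R := ℂ) (S x) := by
          rw [Algebra.TensorProduct.tmul_mul_tmul, QE.antipode_mul hx,
            ← Algebra.TensorProduct.one_def, one_mul]
      _ = (S x ⊗ₜ[ℂ] S x) * ((x ⊗ₜ[ℂ] x) * Coalgebra.comul (R := ℂ) (S x)) := mul_assoc _ _ _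
      _ = S x ⊗ₜ[ℂ] S x := by rw [h, mul_one]

lemma QE.antipode_antipode {x : H} (hx : QEGrouplike x) :
    HopfAlgebra.antipode (R := ℂ) (HopfAlgebra.antipode (R := ℂ) x) = x := by
  set S := HopfAlgebra.antipode (R := ℂ) (A := H)
  calc S (S x) = S (S x) * (S x * x) := by rw [QE.antipode_mul hx, mul_one]
    _ = (S (S x) * S x) * x := (mul_assoc _ _ _).symm
    _ = x := by rw [QE.antipode_mul (QE.grouplike_antipode hx), one_mul]

variable (Sinv : H →ₗ[ℂ] H)

lemma QE.sinv_eq (hS₁ : Sinv ∘ₗ HopfAlgebra.antipode (R := ℂ) (A := H) = LinearMap.id)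
    {x : H} (hx : QEGrouplike x) :
    Sinv x = HopfAlgebra.antipode (R := ℂ) x := by
  conv_lhs => rw [← QE.antipode_antipode hx]
  exact LinearMap.congr_fun hS₁ (HopfAlgebra.antipode (R := ℂ) x)

lemma QE.sinv_sinv (hS₁ : Sinv ∘ₗ HopfAlgebra.antipode (R := ℂ) (A := H) = LinearMap.id)
    {x : H} (hx : QEGrouplike x) : Sinv (Sinv x) = x := by
  rw [QE.sinv_eq Sinv hS₁ hx, QE.sinv_eq Sinv hS₁ (QE.grouplike_antipode hx),
    QE.antipode_antipode hx]

lemma QE.pow_sinv_sinv (hS₁ : Sinv ∘ₗ HopfAlgebra.antipode (R := ℂ) (A := H) = LinearMap.id)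
    {x : H} (hx : QEGrouplike x) (n : ℕ) :
    ((Sinv ∘ₗ Sinv) ^ n) x = x := by
  induction n with
  | zero => simp
  | succ n ih =>
      rw [pow_succ', Module.End.mul_apply, LinearMap.comp_apply, ih,
        QE.sinv_sinv Sinv hS₁ hx]

lemma QE.grouplike_pow {x : H} (hx : QEGrouplike x) (m : ℕ) : QEGrouplike (x ^ m) := by
  refine ⟨?_, ?_⟩
  · rw [Bialgebra.counit_pow, hx.1, one_pow]
  · rw [Bialgebra.comul_pow, hx.2, Algebra.TensorProduct.tmul_pow]

lemma QE.qeT_apply (hS₁ : Sinv ∘ₗ HopfAlgebra.antipode (R := ℂ) (A := H) = LinearMap.id)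
    {g : H} (hg : QEGrouplike g) (j : ℕ) : qeT H Sinv j g = g ^ j := by
  induction j with
  | zero => simp [qeT, hg.1]
  | succ n ih =>
      rw [qeT, LinearMap.comp_apply, LinearMap.comp_apply, hg.2, TensorProduct.map_tmul,
        LinearMap.mul'_apply, ih, QE.pow_sinv_sinv Sinv hS₁ hg, pow_succ]

lemma QE.natCast_smul (a : H) (n : ℕ) : (n : ℂ) • a = a * (n : H) := by
  rw [Nat.cast_smul_eq_nsmul, nsmul_eq_mul, (Nat.cast_commute n a).eq]

/-- Binomial expansion of the applied quasi-exponent condition. -/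
lemma QE.sub_pow_eq_zero {x : H} (N : ℕ)
    (h : ∑ k ∈ Finset.range (N + 1), ((-1 : ℂ) ^ k * (N.choose k : ℂ)) • x ^ k = 0) :
    (1 - x) ^ N = 0 := by
  have hc : Commute (-x) (1 : H) := Commute.one_right _
  have hexp := hc.add_pow N
  have hterm : ∀ k, (-x) ^ k * (1 : H) ^ (N - k) * (N.choose k : H)
      = ((-1 : ℂ) ^ k * (N.choose k : ℂ)) • x ^ k := by
    intro k
    rw [one_pow, mul_one, neg_pow, mul_smul, QE.natCast_smul, mul_assoc]
    rw [show ((-1 : ℂ)) ^ k = (((-1) ^ k : ℤ) : ℂ) by push_cast; ring,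
      Int.cast_smul_eq_zsmul, zsmul_eq_mul]
    push_cast
    ring_nf
  rw [← Finset.sum_congr rfl (fun k _ => hterm k), ← hexp, ← sub_eq_neg_add] at h
  exact h

/-- A unipotent grouplike element equals 1. -/
lemma QE.unipotent_grouplike [FiniteDimensional ℂ H] {x : H} (hx : QEGrouplike x)
    (N : ℕ) (hN : 0 < N) (h : (1 - x) ^ N = 0) : x = 1 := by
  classical
  by_contra hne
  set ν : H := x - 1 with hνdef
  have hν0 : ν ≠ 0 := sub_ne_zero.2 hne
  have hνN : ν ^ N = 0 := by
    rw [hνdef, show x - 1 = -(1 - x) from (neg_sub 1 x).symm, neg_pow, h, mul_zero]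
  have hex : ∃ j, ν ^ (j + 1) = 0 := ⟨N - 1, by rwa [Nat.sub_add_cancel hN]⟩
  set r := Nat.find hex with hrdef
  have hr1 : ν ^ (r + 1) = 0 := Nat.find_spec hex
  have hrpos : 0 < r := by
    rcases Nat.eq_zero_or_pos r with h0 | h0
    · rw [h0, pow_one] at hr1; exact absurd hr1 hν0
    · exact h0
  have hνr : ν ^ r ≠ 0 := by
    intro h0
    exact Nat.find_min hex (show r - 1 < r by omega)
      (by rwa [show r - 1 + 1 = r by omega])
  have hhigh : ∀ j, r < j → ν ^ j = 0 := by
    intro j hj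
    rw [show j = (r + 1) + (j - (r + 1)) by omega, pow_add, hr1, zero_mul]
  -- binomial expansion of powers of x
  have hxν : x = ν + 1 := by rw [hνdef, sub_add_cancel]
  have hkey : ∀ m : ℕ, x ^ m = ∑ j ∈ Finset.range (r + 1), (m.choose j : ℂ) • ν ^ j := by
    intro m
    have h1 : x ^ m = ∑ j ∈ Finset.range (m + 1), (m.choose j : ℂ) • ν ^ j := by
      rw [hxν, (Commute.one_right ν).add_pow]
      refine Finset.sum_congr rfl fun j _ => ?_
      rw [one_pow, mul_one, Nat.cast_smul_eq_nsmul, nsmul_eq_mul,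
        (Nat.cast_commute (m.choose j) (ν ^ j)).eq]
    have e1 : ∑ j ∈ Finset.range (m + 1), (m.choose j : ℂ) • ν ^ j
        = ∑ j ∈ Finset.range (max m r + 1), (m.choose j : ℂ) • ν ^ j := by
      refine Finset.sum_subset (Finset.range_subset_range.2 (by omega)) fun j _ hj => ?_
      have : m < j := by simpa using hj
      simp [Nat.choose_eq_zero_of_lt this]
    have e2 : ∑ j ∈ Finset.range (r + 1), (m.choose j : ℂ) • ν ^ j
        = ∑ j ∈ Finset.range (max m r + 1), (m.choose j : ℂ) • ν ^ j := by
      refine Finset.sum_subset (Finset.range_subset_range.2 (by omega)) fun j _ hj => ?_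
      have : r < j := by simpa using hj
      simp [hhigh j this]
    rw [h1, e1, ← e2]
  -- a functional with f (ν ^ r) = 1
  obtain ⟨f, hf⟩ : ∃ f : Module.Dual ℂ H, f (ν ^ r) = 1 := by
    have h0 : ¬ ∀ φ : Module.Dual ℂ H, φ (ν ^ r) = 0 := by
      rw [Module.forall_dual_apply_eq_zero_iff]; exact hνr
    push_neg at h0
    obtain ⟨φ, hφ⟩ := h0
    exact ⟨(φ (ν ^ r))⁻¹ • φ, by simp [inv_mul_cancel₀ hφ]⟩
  set φ2 : H ⊗[ℂ] H →ₗ[ℂ] ℂ := LinearMap.mul' ℂ ℂ ∘ₗ TensorProduct.map f f with hφ2def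
  have hφ2 : ∀ a b : H, φ2 (a ⊗ₜ[ℂ] b) = f a * f b := by
    intro a b; simp [hφ2def]
  -- the scalar identity
  have hscal : ∀ m : ℕ,
      (∑ j ∈ Finset.range (r + 1), (m.choose j : ℂ) * f (ν ^ j))
        * (∑ j ∈ Finset.range (r + 1), (m.choose j : ℂ) * f (ν ^ j))
      = ∑ j ∈ Finset.range (r + 1), (m.choose j : ℂ) * φ2 (Coalgebra.comul (ν ^ j)) := by
    intro m
    have hcm : Coalgebra.comul (R := ℂ) (x ^ m) = (x ^ m) ⊗ₜ[ℂ] (x ^ m) := by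
      rw [Bialgebra.comul_pow, hx.2, Algebra.TensorProduct.tmul_pow]
    have hfx : f (x ^ m) = ∑ j ∈ Finset.range (r + 1), (m.choose j : ℂ) * f (ν ^ j) := by
      rw [hkey m, map_sum]; exact Finset.sum_congr rfl fun j _ => by rw [map_smul, smul_eq_mul]
    calc (∑ j ∈ Finset.range (r + 1), (m.choose j : ℂ) * f (ν ^ j))
          * (∑ j ∈ Finset.range (r + 1), (m.choose j : ℂ) * f (ν ^ j))
        = f (x ^ m) * f (x ^ m) := by rw [hfx]
      _ = φ2 (Coalgebra.comul (x ^ m)) := by rw [hcm, hφ2]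
      _ = ∑ j ∈ Finset.range (r + 1), (m.choose j : ℂ) * φ2 (Coalgebra.comul (ν ^ j)) := by
          rw [hkey m, map_sum, map_sum]
          exact Finset.sum_congr rfl fun j _ => by rw [map_smul, map_smul, smul_eq_mul]
  -- polynomials
  set ch : ℕ → ℂ[X] := fun j => Polynomial.C ((j.factorial : ℂ)⁻¹) * descPochhammer ℂ j
    with hchdef
  have hcheval : ∀ (j m : ℕ), (ch j).eval (m : ℂ) = (m.choose j : ℂ) := by
    intro j m
    rw [hchdef]
    simp only [eval_mul, eval_C, descPochhammer_eval_eq_descFactorial,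
      Nat.descFactorial_eq_factorial_mul_choose, Nat.cast_mul]
    rw [inv_mul_cancel_left₀ (by exact_mod_cast j.factorial_ne_zero)]
  have hchdeg : ∀ j, (ch j).natDegree ≤ j := by
    intro j
    calc (ch j).natDegree ≤ (descPochhammer ℂ j).natDegree := natDegree_C_mul_le _ _
      _ = j := descPochhammer_natDegree (R := ℂ) (n := j)
  have hchcoeff : ∀ j, (ch j).coeff j = (j.factorial : ℂ)⁻¹ := by
    intro j
    rw [hchdef]
    simp only [coeff_C_mul]
    rw [show (descPochhammer ℂ j).coeff j = 1 from ?_, mul_one]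
    have hm : (descPochhammer ℂ j).Monic := monic_descPochhammer ℂ j
    have := hm.coeff_natDegree
    rwa [descPochhammer_natDegree (R := ℂ)] at this
  set p : ℂ[X] := ∑ j ∈ Finset.range (r + 1), Polynomial.C (f (ν ^ j)) * ch j with hpdef
  set q : ℂ[X] := ∑ j ∈ Finset.range (r + 1),
      Polynomial.C (φ2 (Coalgebra.comul (ν ^ j))) * ch j with hqdef
  have hpeval : ∀ m : ℕ, p.eval (m : ℂ)
      = ∑ j ∈ Finset.range (r + 1), (m.choose j : ℂ) * f (ν ^ j) := by
    intro m
    rw [hpdef, eval_finset_sum]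
    exact Finset.sum_congr rfl fun j _ => by rw [eval_mul, eval_C, hcheval, mul_comm]
  have hqeval : ∀ m : ℕ, q.eval (m : ℂ)
      = ∑ j ∈ Finset.range (r + 1), (m.choose j : ℂ) * φ2 (Coalgebra.comul (ν ^ j)) := by
    intro m
    rw [hqdef, eval_finset_sum]
    exact Finset.sum_congr rfl fun j _ => by rw [eval_mul, eval_C, hcheval, mul_comm]
  have hpq : p * p = q := by
    have hroot : ∀ m : ℕ, (p * p - q).IsRoot (m : ℂ) := by
      intro m
      simp only [IsRoot, eval_sub, eval_mul, hpeval, hqeval]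
      rw [hscal m, sub_self]
    have hinf : { z : ℂ | (p * p - q).IsRoot z }.Infinite :=
      Set.infinite_of_injective_forall_mem (f := fun m : ℕ => (m : ℂ))
        Nat.cast_injective hroot
    have := eq_zero_of_infinite_isRoot _ hinf
    exact sub_eq_zero.1 this
  -- degrees
  have hpcoeff : p.coeff r = (r.factorial : ℂ)⁻¹ := by
    rw [hpdef, finset_sum_coeff]
    rw [Finset.sum_eq_single r]
    · rw [coeff_C_mul, hchcoeff, hf, one_mul]
    · intro j hj hjr
      have hjr' : j < r := by
        have := Finset.mem_range.1 hj; omega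
      rw [coeff_C_mul, coeff_eq_zero_of_natDegree_lt (lt_of_le_of_lt (hchdeg j) hjr'),
        mul_zero]
    · intro hr; exact absurd (Finset.self_mem_range_succ r) hr
  have hpcne : p.coeff r ≠ 0 := by
    rw [hpcoeff]
    exact inv_ne_zero (by exact_mod_cast r.factorial_ne_zero)
  have hp0 : p ≠ 0 := fun h0 => by simp [h0] at hpcne
  have hpdeg : p.natDegree = r := by
    refine le_antisymm ?_ (le_natDegree_of_ne_zero hpcne)
    rw [hpdef]
    refine natDegree_sum_le_of_forall_le _ _ fun j hj => ?_
    calc (Polynomial.C (f (ν ^ j)) * ch j).natDegree ≤ (ch j).natDegree :=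
        natDegree_C_mul_le _ _
      _ ≤ j := hchdeg j
      _ ≤ r := by have := Finset.mem_range.1 hj; omega
  have hqdeg : q.natDegree ≤ r := by
    rw [hqdef]
    refine natDegree_sum_le_of_forall_le _ _ fun j hj => ?_
    calc (Polynomial.C (φ2 (Coalgebra.comul (ν ^ j))) * ch j).natDegree ≤ (ch j).natDegree :=
        natDegree_C_mul_le _ _
      _ ≤ j := hchdeg j
      _ ≤ r := by have := Finset.mem_range.1 hj; omega
  have hmul := natDegree_mul hp0 hp0
  rw [hpq, hpdeg] at hmul
  omega

end auxiliary

/-- Let `H` be a finite-dimensional Hopf algebra over `ℂ` with bijective antipode and let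
`g ∈ H` be grouplike (`ε g = 1` and `Δ g = g ⊗ g`).  If a positive integer `n` satisfies
the quasi-exponent condition for `H`, then `g ^ n = 1`; in particular the order of `g`
divides `qexp H`. -/
theorem grouplike_pow_qexpCond_eq_one (H : Type*) [Ring H] [HopfAlgebra ℂ H]
    [FiniteDimensional ℂ H] (Sinv : H →ₗ[ℂ] H)
    (hS₁ : Sinv ∘ₗ HopfAlgebra.antipode (R := ℂ) (A := H) = LinearMap.id)
    (hS₂ : HopfAlgebra.antipode (R := ℂ) (A := H) ∘ₗ Sinv = LinearMap.id)
    (g : H) (hg₁ : Coalgebra.counit (R := ℂ) g = 1)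
    (hg₂ : Coalgebra.comul (R := ℂ) g = g ⊗ₜ[ℂ] g) :
    (∀ n : ℕ, 0 < n → qexpCond H Sinv n → g ^ n = 1) ∧
      orderOf g ∣ sInf {m : ℕ | 0 < m ∧ qexpCond H Sinv m} := by
  have hg : QEGrouplike g := ⟨hg₁, hg₂⟩
  have key : ∀ n : ℕ, 0 < n → qexpCond H Sinv n → g ^ n = 1 := by
    intro n hn hcond
    obtain ⟨N, hN, hsum⟩ := hcond
    have happ := LinearMap.congr_fun hsum g
    simp only [LinearMap.sum_apply, LinearMap.smul_apply, LinearMap.zero_apply] at happ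
    have happ' : ∑ k ∈ Finset.range (N + 1),
        ((-1 : ℂ) ^ k * (N.choose k : ℂ)) • (g ^ n) ^ k = 0 := by
      rw [← happ]
      exact Finset.sum_congr rfl fun k _ => by
        rw [QE.qeT_apply Sinv hS₁ hg, pow_mul]
    exact QE.unipotent_grouplike (QE.grouplike_pow hg n) N hN (QE.sub_pow_eq_zero N happ')
  refine ⟨key, ?_⟩
  rcases Set.eq_empty_or_nonempty {m : ℕ | 0 < m ∧ qexpCond H Sinv m} with hS | hS
  · rw [hS, Nat.sInf_empty]
    exact dvd_zero _
  · have hm := Nat.sInf_mem hS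
    exact orderOf_dvd_of_pow_eq_one (key _ hm.1 hm.2)
end

section
/- Let H be a finite-dimensional Hopf algebra over ℂ with bijective antipode, and let g ∈ H be a grouplike element. Suppose there exist positive integers n and N such that for every h ∈ H one has ∑_{k=0}^{N} (-1)^k (N choose k) · T_{nk}(h) · g^k = 0 in H. Then g = 1. -/
open TensorProduct

/-- Over a field, `a ⊗ a = 0` forces `a = 0`. -/
private lemma tmul_self_eq_zero' {V : Type*} [AddCommGroup V] [Module ℂ V] {a : V}
    (h : a ⊗ₜ[ℂ] a = 0) : a = 0 := by
  rw [← Module.forall_dual_apply_eq_zero_iff ℂ a]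
  intro φ
  have h2 := congrArg (fun t => (TensorProduct.lid ℂ V)
    (TensorProduct.map φ (LinearMap.id : V →ₗ[ℂ] V) t)) h
  simp only [TensorProduct.map_tmul, LinearMap.id_coe, id_eq,
    TensorProduct.lid_tmul, map_zero] at h2
  rcases smul_eq_zero.mp h2 with h3 | h3
  · exact h3
  · rw [h3, map_zero]

/-- Let `H` be a finite-dimensional Hopf algebra over `ℂ` with bijective antipode and
`g ∈ H` grouplike.  If for some positive integers `n, N` one has
`∑_{k=0}^N (-1)^k (N choose k) • T_{nk}(h) * g^k = 0` for all `h ∈ H` (the translation of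
the statement that `g·uⁿ` is unipotent in the Drinfeld double), then `g = 1`. -/
theorem grouplike_eq_one_of_unipotent_rel (H : Type*) [Ring H] [HopfAlgebra ℂ H]
    [FiniteDimensional ℂ H] (Sinv : H →ₗ[ℂ] H)
    (hS₁ : Sinv ∘ₗ HopfAlgebra.antipode (R := ℂ) (A := H) = LinearMap.id)
    (hS₂ : HopfAlgebra.antipode (R := ℂ) (A := H) ∘ₗ Sinv = LinearMap.id)
    (g : H) (hg₁ : Coalgebra.counit (R := ℂ) g = 1)
    (hg₂ : Coalgebra.comul (R := ℂ) g = g ⊗ₜ[ℂ] g)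
    (n N : ℕ) (hn : 0 < n) (hN : 0 < N)
    (h : ∀ x : H, ∑ k ∈ Finset.range (N + 1),
      ((-1 : ℂ) ^ k * (N.choose k : ℂ)) • (qeT H Sinv (n * k) x * g ^ k) = 0) :
    g = 1 := by
  classical
  -- the antipode and its inverse fix `1`
  have hanti1 : HopfAlgebra.antipode (R := ℂ) (A := H) 1 = 1 := by
    have := HopfAlgebra.mul_antipode_rTensor_comul_apply (R := ℂ) (a := (1 : H))
    simpa [Algebra.TensorProduct.one_def] using this
  have hSinv1 : Sinv 1 = 1 := by
    have := congrArg (fun f : H →ₗ[ℂ] H => f 1) hS₁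
    simpa [hanti1] using this
  have hpow1 : ∀ j : ℕ, ((Sinv ∘ₗ Sinv) ^ j) 1 = 1 := by
    intro j
    induction j with
    | zero => simp
    | succ j ih =>
      rw [pow_succ, Module.End.mul_apply, LinearMap.comp_apply, hSinv1, hSinv1, ih]
  -- `T_k 1 = 1`
  have hqeT1 : ∀ k : ℕ, qeT H Sinv k 1 = 1 := by
    intro k
    induction k with
    | zero => simp [qeT]
    | succ k ih =>
      rw [qeT]
      simp only [LinearMap.comp_apply]
      rw [Bialgebra.comul_one, Algebra.TensorProduct.one_def, TensorProduct.map_tmul, ih,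
        hpow1, LinearMap.mul'_apply, one_mul]
  -- the unipotency relation evaluated at `1`
  have hsum : ∑ k ∈ Finset.range (N + 1), ((-1 : ℂ) ^ k * (N.choose k : ℂ)) • g ^ k = 0 := by
    have h1 := h 1
    simp only [hqeT1, one_mul] at h1
    exact h1
  -- `x := g - 1` is nilpotent
  set x : H := g - 1 with hxdef
  have hgx : g = x + 1 := by rw [hxdef]; abel
  have hxN : x ^ N = 0 := by
    have hc : Commute g (-1 : H) := Commute.neg_one_right g
    have hb := hc.add_pow N
    rw [← sub_eq_add_neg] at hb
    rw [hxdef, hb]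
    calc ∑ m ∈ Finset.range (N + 1), g ^ m * (-1 : H) ^ (N - m) * (N.choose m : H)
        = ∑ m ∈ Finset.range (N + 1),
            ((-1 : ℂ) ^ N) • (((-1 : ℂ) ^ m * (N.choose m : ℂ)) • g ^ m) := by
          refine Finset.sum_congr rfl fun m hm => ?_
          rw [Finset.mem_range, Nat.lt_succ_iff] at hm
          have e1 : ((-1 : H)) ^ (N - m) = algebraMap ℂ H ((-1 : ℂ) ^ (N - m)) := by
            rw [map_pow, map_neg, map_one]
          have e2 : ((N.choose m : H)) = algebraMap ℂ H ((N.choose m : ℂ)) := by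
            rw [map_natCast]
          rw [e1, e2, ← Algebra.commutes ((-1 : ℂ) ^ (N - m)) (g ^ m), mul_assoc,
            ← Algebra.commutes ((N.choose m : ℂ)) (g ^ m), ← mul_assoc, ← map_mul,
            ← Algebra.smul_def, smul_smul]
          congr 1
          have e3 : (-1 : ℂ) ^ (N - m) * (-1 : ℂ) ^ m = (-1 : ℂ) ^ N := by
            rw [← pow_add, Nat.sub_add_cancel hm]
          have e4 : (-1 : ℂ) ^ m * (-1 : ℂ) ^ m = 1 := by
            rw [← pow_add]; exact Even.neg_one_pow ⟨m, rfl⟩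
          linear_combination ((-1 : ℂ) ^ m * (N.choose m : ℂ)) * e3
            - ((-1 : ℂ) ^ (N - m) * (N.choose m : ℂ)) * e4
      _ = 0 := by rw [← Finset.smul_sum, hsum, smul_zero]
  have hex : ∃ j : ℕ, x ^ j = 0 := ⟨N, hxN⟩
  have hm : x ^ Nat.find hex = 0 := Nat.find_spec hex
  set m : ℕ := Nat.find hex with hmdef
  have hmin : ∀ j, j < m → x ^ j ≠ 0 := fun j hj => Nat.find_min hex hj
  rcases Nat.lt_or_ge m 2 with hm2 | hm2
  · rcases (by omega : m = 0 ∨ m = 1) with h0 | h1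
    · rw [h0, pow_zero] at hm
      calc g = g * 1 := (mul_one g).symm
        _ = g * 0 := by rw [hm]
        _ = 0 := mul_zero g
        _ = 1 := by rw [← hm]
    · rw [h1, pow_one, hxdef] at hm
      exact sub_eq_zero.mp hm
  · exfalso
    have hxm1 : x ^ (m - 1) ≠ 0 := hmin _ (by omega)
    -- comultiplication of x
    have hΔ1 : (Bialgebra.comulAlgHom ℂ H) x = x ⊗ₜ[ℂ] g + (1 : H) ⊗ₜ[ℂ] x := by
      rw [hxdef, map_sub, map_one, Bialgebra.comulAlgHom_apply, hg₂,
        Algebra.TensorProduct.one_def, sub_tmul, tmul_sub]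
      abel
    have hc2 : Commute (x ⊗ₜ[ℂ] g) ((1 : H) ⊗ₜ[ℂ] x) := by
      unfold Commute SemiconjBy
      rw [Algebra.TensorProduct.tmul_mul_tmul, Algebra.TensorProduct.tmul_mul_tmul,
        one_mul, mul_one, hxdef, mul_sub, sub_mul, mul_one, one_mul]
    have hzero : ∑ j ∈ Finset.range (m + 1),
        (x ⊗ₜ[ℂ] g) ^ j * ((1 : H) ⊗ₜ[ℂ] x) ^ (m - j) * (m.choose j : H ⊗[ℂ] H) = 0 := by
      rw [← hc2.add_pow m, ← hΔ1, ← map_pow, hm, map_zero]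
    have hmul : ∑ j ∈ Finset.range (m + 1), ((x ^ (m - 2)) ⊗ₜ[ℂ] (1 : H)) *
        ((x ⊗ₜ[ℂ] g) ^ j * ((1 : H) ⊗ₜ[ℂ] x) ^ (m - j) * (m.choose j : H ⊗[ℂ] H)) = 0 := by
      rw [← Finset.mul_sum, hzero, mul_zero]
    have hg3 : g * x ^ (m - 1) = x ^ (m - 1) := by
      rw [hgx, add_mul, one_mul, ← pow_succ', show m - 1 + 1 = m by omega, hm, zero_add]
    have hsingle := Finset.sum_eq_single_of_mem (s := Finset.range (m + 1))
      (f := fun j => ((x ^ (m - 2)) ⊗ₜ[ℂ] (1 : H)) *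
        ((x ⊗ₜ[ℂ] g) ^ j * ((1 : H) ⊗ₜ[ℂ] x) ^ (m - j) * (m.choose j : H ⊗[ℂ] H)))
      1 (Finset.mem_range.mpr (by omega)) ?_
    · rw [hsingle] at hmul
      simp only [pow_one, Algebra.TensorProduct.tmul_pow, one_pow, Nat.choose_one_right] at hmul
      rw [Algebra.TensorProduct.tmul_mul_tmul, mul_one, hg3, ← nsmul_eq_mul',
        mul_smul_comm, Algebra.TensorProduct.tmul_mul_tmul, one_mul, ← pow_succ,
        show m - 2 + 1 = m - 1 by omega, ← Nat.cast_smul_eq_nsmul ℂ] at hmul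
      rcases smul_eq_zero.mp hmul with h3 | h3
      · exact absurd (Nat.cast_eq_zero.mp h3) (by omega)
      · exact hxm1 (tmul_self_eq_zero' h3)
    · intro j hj hj1
      rcases Nat.eq_zero_or_pos j with rfl | hjpos
      · simp [hm]
      · have hj2 : 2 ≤ j := by omega
        have e : x ^ (m - 2) * x ^ j = 0 := by
          rw [← pow_add, show m - 2 + j = m + (j - 2) by omega, pow_add, hm, zero_mul]
        simp only [Algebra.TensorProduct.tmul_pow, one_pow]
        rw [Algebra.TensorProduct.tmul_mul_tmul, mul_one, ← mul_assoc,
          Algebra.TensorProduct.tmul_mul_tmul, e, TensorProduct.zero_tmul, zero_mul]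
end

section
/- Let H be a finite-dimensional Hopf algebra over ℂ, let J be a twist for H, and set Q = m∘(S⊗Id)(J), which is invertible with Q⁻¹ = m∘(Id⊗S)(J⁻¹). Suppose S^{2n} = Id for a positive integer n, and set g := S^{2n−1}(Q⁻¹)·S^{2n−2}(Q)·⋯·S³(Q⁻¹)·S²(Q)·S(Q⁻¹)·Q (the alternating product of the elements S^{2k+1}(Q⁻¹)S^{2k}(Q) for k = n−1 down to 0). Then ε(g) = 1 and Δ(g) = J·(g⊗g)·J⁻¹; that is, g is a grouplike element of the twisted Hopf algebra H^J. -/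
/-!
Write `Q = S(J¹)J²` and `φ = (S ⊗ S) ∘ flip`, an anti-endomorphism of `H ⊗ H` with
`Δ ∘ S = φ ∘ Δ` and `φ ∘ φ = S² ⊗ S²`. Applying `x ⊗ Y ↦ (S x ⊗ 1)·Y` and `V ⊗ z ↦ φ(V)·Δ(z)` to
the cocycle identity gives `Δ(Q) = φ(J⁻¹)(Q ⊗ Q)J⁻¹`, hence `Δ(Q⁻¹) = J(Q⁻¹ ⊗ Q⁻¹)φ(J)`, and
`v = S(Q⁻¹)Q` satisfies `Δ(v) = (S² ⊗ S²)(J)(v ⊗ v)J⁻¹`. Now `g = S^{2(n-1)}(v) ⋯ S²(v)·v`, and in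
`Δ(g)` the factors `(S^{2k} ⊗ S^{2k})(J⁻¹J)` telescope, leaving
`(S^{2n} ⊗ S^{2n})(J)(g ⊗ g)J⁻¹ = J(g ⊗ g)J⁻¹`.
-/

open TensorProduct Coalgebra HopfAlgebra

noncomputable section

namespace HopfTwist

section Algebra

variable {R H : Type*} [CommSemiring R] [Semiring H] [Algebra R H]

lemma tensorMap_pow (σ : H →ₐ[R] H) (m : ℕ) :
    Algebra.TensorProduct.map (σ ^ m) (σ ^ m) = Algebra.TensorProduct.map σ σ ^ m := by
  induction m with
  | zero => exact Algebra.TensorProduct.map_id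
  | succ m ih => rw [pow_succ, pow_succ, ← ih]; exact Algebra.TensorProduct.map_comp _ _ _ _

def orbitProd (σ : H →ₐ[R] H) (v : H) (m : ℕ) : H :=
  ((List.range m).reverse.map fun k => (σ ^ k) v).prod

variable {σ : H →ₐ[R] H} {v : H}

lemma orbitProd_zero : orbitProd σ v 0 = 1 := rfl

lemma orbitProd_succ (m : ℕ) : orbitProd σ v (m + 1) = (σ ^ m) v * orbitProd σ v m := by
  simp [orbitProd, List.range_succ]

end Algebra

section Bialgebra

variable {R H : Type*} [CommSemiring R] [Semiring H] [Bialgebra R H] {σ : H →ₐ[R] H} {v : H}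

def IsTwistCocycle (J : H ⊗[R] H) : Prop :=
  Algebra.TensorProduct.assoc R R R H H H (map comul LinearMap.id J * (J ⊗ₜ 1)) =
    map LinearMap.id comul J * (1 ⊗ₜ J)

lemma counit_orbitProd (hσ : ∀ x, counit (R := R) (σ x) = counit x)
    (hv : counit (R := R) v = 1) (m : ℕ) : counit (R := R) (orbitProd σ v m) = 1 := by
  have hσm (k : ℕ) : counit (R := R) ((σ ^ k) v) = 1 := by
    induction k with
    | zero => exact hv
    | succ k ih => rwa [pow_succ', AlgHom.mul_apply, hσ]
  induction m with
  | zero => simp [orbitProd_zero]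
  | succ m ih => rw [orbitProd_succ, Bialgebra.counit_mul, hσm, ih, one_mul]

lemma comul_orbitProd {J J' : H ⊗[R] H} (hJJ' : J * J' = 1) (hJ'J : J' * J = 1)
    (hσ : ∀ x, comul (σ x) = Algebra.TensorProduct.map σ σ (comul (R := R) x))
    (hv : comul v = Algebra.TensorProduct.map σ σ J * (v ⊗ₜ v) * J') (m : ℕ) :
    comul (orbitProd σ v m) =
      (Algebra.TensorProduct.map σ σ ^ m) J * (orbitProd σ v m ⊗ₜ orbitProd σ v m) * J' := by
  set T := Algebra.TensorProduct.map σ σ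
  have hσm (k : ℕ) : comul ((σ ^ k) v) = (T ^ k) (comul v) := by
    rw [AlgHom.coe_pow, AlgHom.coe_pow]
    exact (Function.Semiconj.iterate_right hσ k) v
  induction m with
  | zero => simp [orbitProd_zero, ← Algebra.TensorProduct.one_def, hJJ']
  | succ m ih =>
    have hcancel : (T ^ m) J' * (T ^ m) J = 1 := by rw [← map_mul, hJ'J, map_one]
    have hvv : (T ^ m) (v ⊗ₜ v) = (σ ^ m) v ⊗ₜ (σ ^ m) v := by
      rw [← tensorMap_pow, Algebra.TensorProduct.map_tmul]
    rw [orbitProd_succ, Bialgebra.comul_mul, ih, hσm, hv, map_mul, map_mul, ← AlgHom.mul_apply,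
      ← pow_succ, hvv]
    calc _ = (T ^ (m + 1)) J * ((σ ^ m) v ⊗ₜ (σ ^ m) v) * ((T ^ m) J' * (T ^ m) J) *
          (orbitProd σ v m ⊗ₜ orbitProd σ v m) * J' := by simp only [mul_assoc]
      _ = _ := by
        rw [hcancel, mul_one, mul_assoc ((T ^ (m + 1)) J), Algebra.TensorProduct.tmul_mul_tmul]

end Bialgebra

section Hopf

variable {R H : Type*} [CommSemiring R] [Semiring H] [HopfAlgebra R H]

def antipodeComm : H ⊗[R] H →ₗ[R] H ⊗[R] H :=
  map (antipode R) (antipode R) ∘ₗ (TensorProduct.comm R H H).toLinearMap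

@[simp] lemma antipodeComm_tmul (x y : H) :
    antipodeComm (x ⊗ₜ[R] y) = antipode R y ⊗ₜ[R] antipode R x := rfl

lemma antipodeComm_mul (X Y : H ⊗[R] H) :
    antipodeComm (X * Y) = antipodeComm Y * antipodeComm X := by
  induction X using TensorProduct.induction_on with
  | zero => simp
  | add X₁ X₂ h₁ h₂ => simp only [add_mul, mul_add, map_add, h₁, h₂]
  | tmul x y =>
    induction Y using TensorProduct.induction_on with
    | zero => simp
    | add Y₁ Y₂ h₁ h₂ => simp only [add_mul, mul_add, map_add, h₁, h₂]
    | tmul u v => simp [antipode_mul_antidistrib]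

open WithConv in
lemma comul_comp_antipode :
    comul ∘ₗ antipode R = antipodeComm ∘ₗ comul (R := R) (A := H) := by
  -- In the convolution algebra `antipodeComm ∘ Δ = (1 ⊗ S(·)) * (S(·) ⊗ 1)` and
  -- `Δ = (· ⊗ 1) * (1 ⊗ ·)`, so it is a left inverse of `Δ`; `Δ ∘ S` is a right inverse.
  let inl : H →ₐ[R] H ⊗[R] H := Algebra.TensorProduct.includeLeft
  let inr : H →ₐ[R] H ⊗[R] H := Algebra.TensorProduct.includeRight
  have hS (i : H →ₐ[R] H ⊗[R] H) :
      toConv (i.toLinearMap ∘ₗ antipode R) * toConv i.toLinearMap = 1 := by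
    ext a
    simp [(ℛ R a).convMul_apply, ← map_mul, ← map_sum, sum_antipode_mul_eq_algebraMap_counit]
  have hcomul :
      toConv (comul (R := R) (A := H)) = toConv inl.toLinearMap * toConv inr.toLinearMap := by
    ext a; simp [(ℛ R a).convMul_apply, inl, inr, (ℛ R a).eq]
  have hflip : toConv (antipodeComm ∘ₗ comul (R := R) (A := H)) =
      toConv (inr.toLinearMap ∘ₗ antipode R) * toConv (inl.toLinearMap ∘ₗ antipode R) := by
    ext a
    rw [(ℛ R a).convMul_apply, LinearMap.comp_apply, ← (ℛ R a).eq]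
    simp [inl, inr]
  have hleft : toConv (antipodeComm ∘ₗ comul (R := R) (A := H)) * toConv comul = 1 := by
    rw [hflip, hcomul, mul_assoc, ← mul_assoc (toConv (inl.toLinearMap ∘ₗ antipode R)), hS,
      one_mul, hS]
  exact toConv_injective (left_inv_eq_right_inv hleft LinearMap.comul_right_inv).symm

lemma comul_antipode (a : H) : comul (antipode R a) = antipodeComm (comul (R := R) a) :=
  LinearMap.congr_fun comul_comp_antipode a

lemma antipodeComm_one : antipodeComm (1 : H ⊗[R] H) = 1 := by
  simp [Algebra.TensorProduct.one_def]

variable (R H) in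
def antipodeSqAlgHom : H →ₐ[R] H :=
  AlgHom.ofLinearMap (antipode R ∘ₗ antipode R) (by simp)
    (fun x y => by simp [antipode_mul_antidistrib])

lemma antipodeSqAlgHom_apply (x : H) :
    antipodeSqAlgHom R H x = antipode R (antipode R x) := rfl

lemma antipodeSqAlgHom_pow_apply (k : ℕ) (x : H) :
    (antipodeSqAlgHom R H ^ k) x = (antipode R ^ (2 * k)) x := by
  induction k generalizing x with
  | zero => rfl
  | succ k ih => rw [pow_succ, AlgHom.mul_apply, ih, Nat.mul_succ, pow_add, pow_two]; rfl

lemma antipodeComm_antipodeComm (X : H ⊗[R] H) :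
    antipodeComm (antipodeComm X) =
      Algebra.TensorProduct.map (antipodeSqAlgHom R H) (antipodeSqAlgHom R H) X := by
  induction X using TensorProduct.induction_on with
  | zero => simp
  | add X₁ X₂ h₁ h₂ => simp only [map_add, h₁, h₂]
  | tmul x y => rfl

lemma comul_antipodeSqAlgHom (x : H) :
    comul (antipodeSqAlgHom R H x) =
      Algebra.TensorProduct.map (antipodeSqAlgHom R H) (antipodeSqAlgHom R H)
        (comul (R := R) x) := by
  rw [antipodeSqAlgHom_apply, comul_antipode, comul_antipode, antipodeComm_antipodeComm]

lemma counit_antipodeSqAlgHom (x : H) :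
    counit (R := R) (antipodeSqAlgHom R H x) = counit x := by
  simp [antipodeSqAlgHom_apply]

def mulAntipodeRTensor : H ⊗[R] H →ₗ[R] H :=
  LinearMap.mul' R H ∘ₗ map (antipode R) LinearMap.id

@[simp] lemma mulAntipodeRTensor_tmul (x y : H) :
    mulAntipodeRTensor (x ⊗ₜ[R] y) = antipode R x * y := rfl

lemma mulAntipodeRTensor_comp_comul :
    mulAntipodeRTensor ∘ₗ comul = Algebra.linearMap R H ∘ₗ counit :=
  mul_antipode_rTensor_comul

lemma mulAntipodeRTensor_comul_mul (a : H) (Y : H ⊗[R] H) :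
    mulAntipodeRTensor (comul a * Y) = counit (R := R) a • mulAntipodeRTensor Y := by
  induction Y using TensorProduct.induction_on with
  | zero => simp
  | add Y₁ Y₂ h₁ h₂ => simp only [mul_add, map_add, h₁, h₂, smul_add]
  | tmul u v =>
    rw [← (ℛ R a).eq, Finset.sum_mul, map_sum]
    simp only [Algebra.TensorProduct.tmul_mul_tmul, mulAntipodeRTensor_tmul,
      antipode_mul_antidistrib, mul_assoc]
    calc _ = antipode R u *
          (∑ i ∈ (ℛ R a).index, antipode R ((ℛ R a).left i) * (ℛ R a).right i) * v := by
          simp only [Finset.mul_sum, Finset.sum_mul, mul_assoc]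
      _ = _ := by simp [sum_antipode_mul_eq_smul]

def antipodeMulLeft : H ⊗[R] (H ⊗[R] H) →ₗ[R] H ⊗[R] H :=
  LinearMap.mul' R (H ⊗[R] H) ∘ₗ
    map ((Algebra.TensorProduct.includeLeft : H →ₐ[R] H ⊗[R] H).toLinearMap ∘ₗ antipode R)
      LinearMap.id

@[simp] lemma antipodeMulLeft_tmul (x : H) (Y : H ⊗[R] H) :
    antipodeMulLeft (x ⊗ₜ[R] Y) = (antipode R x ⊗ₜ[R] (1 : H)) * Y := rfl

lemma antipodeMulLeft_assoc (T : (H ⊗[R] H) ⊗[R] H) :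
    antipodeMulLeft (TensorProduct.assoc R H H H T) =
      map mulAntipodeRTensor LinearMap.id T := by
  have : antipodeMulLeft ∘ₗ (TensorProduct.assoc R H H H).toLinearMap =
      map mulAntipodeRTensor LinearMap.id := by
    ext x y z
    simp
  exact LinearMap.congr_fun this T

lemma antipodeMulLeft_mul_one_tmul (W : H ⊗[R] (H ⊗[R] H)) (Z : H ⊗[R] H) :
    antipodeMulLeft (W * (1 ⊗ₜ Z)) = antipodeMulLeft W * Z := by
  induction W using TensorProduct.induction_on with
  | zero => simp
  | add W₁ W₂ h₁ h₂ => simp only [add_mul, map_add, h₁, h₂]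
  | tmul x Y => simp [mul_assoc]

lemma antipodeMulLeft_lTensor_comul_comul (y : H) :
    antipodeMulLeft (map LinearMap.id comul (comul (R := R) y)) = 1 ⊗ₜ y := by
  have hcoassoc := Coalgebra.coassoc_apply (R := R) y
  rw [LinearMap.lTensor] at hcoassoc
  have hcollapse : map mulAntipodeRTensor LinearMap.id ∘ₗ comul.rTensor H =
      (Algebra.linearMap R H).rTensor H ∘ₗ counit.rTensor H := by
    simp only [LinearMap.rTensor, ← map_comp, mulAntipodeRTensor_comp_comul, LinearMap.id_comp]
  rw [← hcoassoc, antipodeMulLeft_assoc, ← LinearMap.comp_apply, hcollapse, LinearMap.comp_apply,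
    rTensor_counit_comul]
  simp

lemma map_mulAntipodeRTensor_rTensor_comul_mul (X Y : H ⊗[R] H) (w : H) :
    map mulAntipodeRTensor LinearMap.id (map comul LinearMap.id X * (Y ⊗ₜ w)) =
      mulAntipodeRTensor Y ⊗ₜ (TensorProduct.lid R H (map counit LinearMap.id X) * w) := by
  induction X using TensorProduct.induction_on with
  | zero => simp
  | add X₁ X₂ h₁ h₂ => simp only [add_mul, map_add, h₁, h₂, tmul_add]
  | tmul x z =>
    simp [mulAntipodeRTensor_comul_mul, TensorProduct.smul_tmul]

variable {J J' : H ⊗[R] H}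

lemma antipodeMulLeft_lTensor_comul_mul_self (hJ : IsTwistCocycle J)
    (hε : TensorProduct.lid R H (map counit LinearMap.id J) = 1) :
    antipodeMulLeft (map LinearMap.id comul J) * J = mulAntipodeRTensor J ⊗ₜ 1 := by
  rw [← antipodeMulLeft_mul_one_tmul, ← hJ]
  exact (antipodeMulLeft_assoc _).trans <| by
    rw [map_mulAntipodeRTensor_rTensor_comul_mul, hε, mul_one]

lemma antipodeMulLeft_lTensor_comul_eq (hJ : IsTwistCocycle J)
    (hε : TensorProduct.lid R H (map counit LinearMap.id J) = 1) (hJJ' : J * J' = 1) :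
    antipodeMulLeft (map LinearMap.id comul J) = (mulAntipodeRTensor J ⊗ₜ 1) * J' := by
  rw [← antipodeMulLeft_lTensor_comul_mul_self hJ hε, mul_assoc, hJJ', mul_one]

def antipodeCommMulComul : (H ⊗[R] H) ⊗[R] H →ₗ[R] H ⊗[R] H :=
  LinearMap.mul' R (H ⊗[R] H) ∘ₗ map antipodeComm comul

@[simp] lemma antipodeCommMulComul_tmul (V : H ⊗[R] H) (z : H) :
    antipodeCommMulComul (V ⊗ₜ[R] z) = antipodeComm V * comul z := rfl

lemma antipodeCommMulComul_rTensor_comul (X : H ⊗[R] H) :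
    antipodeCommMulComul (map comul LinearMap.id X) = comul (mulAntipodeRTensor X) := by
  induction X using TensorProduct.induction_on with
  | zero => simp
  | add X₁ X₂ h₁ h₂ => simp only [map_add, h₁, h₂]
  | tmul a b => simp [← comul_antipode]

lemma antipodeCommMulComul_mul_tmul_one (X : (H ⊗[R] H) ⊗[R] H) (Y : H ⊗[R] H) :
    antipodeCommMulComul (X * (Y ⊗ₜ 1)) = antipodeComm Y * antipodeCommMulComul X := by
  induction X using TensorProduct.induction_on with
  | zero => simp
  | add X₁ X₂ h₁ h₂ => simp only [add_mul, mul_add, map_add, h₁, h₂]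
  | tmul V z => simp [antipodeComm_mul, mul_assoc]

lemma antipodeCommMulComul_assoc_symm (X Z : H ⊗[R] H) :
    antipodeCommMulComul
        ((TensorProduct.assoc R H H H).symm (map LinearMap.id comul X * (1 ⊗ₜ Z))) =
      (1 ⊗ₜ mulAntipodeRTensor X) * antipodeMulLeft (map LinearMap.id comul Z) := by
  have h_tmul_mul (x u v : H) (Y : H ⊗[R] H) :
      antipodeCommMulComul ((TensorProduct.assoc R H H H).symm (x ⊗ₜ (Y * (u ⊗ₜ v)))) =
        (antipode R u ⊗ₜ antipode R x) * antipodeMulLeft (map LinearMap.id comul Y) * comul v := by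
    induction Y using TensorProduct.induction_on with
    | zero => simp
    | add Y₁ Y₂ h₁ h₂ => simp only [add_mul, mul_add, tmul_add, map_add, h₁, h₂]
    | tmul p q =>
      simp [antipode_mul_antidistrib, ← mul_assoc]
  induction X using TensorProduct.induction_on with
  | zero => simp
  | add X₁ X₂ h₁ h₂ => simp only [add_mul, map_add, h₁, h₂, tmul_add]
  | tmul x y =>
    induction Z using TensorProduct.induction_on with
    | zero => simp
    | add Z₁ Z₂ h₁ h₂ => simp only [mul_add, tmul_add, map_add, h₁, h₂]
    | tmul u v =>
      simp [h_tmul_mul, antipodeMulLeft_lTensor_comul_comul, ← mul_assoc]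

lemma comul_mulAntipodeRTensor (hJ : IsTwistCocycle J)
    (hε : TensorProduct.lid R H (map counit LinearMap.id J) = 1) (hJJ' : J * J' = 1) :
    comul (mulAntipodeRTensor J) =
      antipodeComm J' * (mulAntipodeRTensor J ⊗ₜ mulAntipodeRTensor J) * J' := by
  set Q := mulAntipodeRTensor J
  have hJ₁ : (J * J') ⊗ₜ[R] (1 : H) = 1 := by
    rw [hJJ']
    rfl
  calc comul Q = antipodeCommMulComul (map comul LinearMap.id J) :=
        (antipodeCommMulComul_rTensor_comul J).symm
    _ = antipodeCommMulComul (map comul LinearMap.id J * (J ⊗ₜ 1) * (J' ⊗ₜ 1)) := by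
        rw [mul_assoc, Algebra.TensorProduct.tmul_mul_tmul, mul_one, hJ₁, mul_one]
    _ = antipodeComm J' * antipodeCommMulComul
          ((TensorProduct.assoc R H H H).symm (map LinearMap.id comul J * (1 ⊗ₜ J))) := by
        rw [antipodeCommMulComul_mul_tmul_one, ← hJ]
        show _ = _ * antipodeCommMulComul ((TensorProduct.assoc R H H H).symm
          (TensorProduct.assoc R H H H _))
        rw [LinearEquiv.symm_apply_apply]
    _ = antipodeComm J' * (Q ⊗ₜ Q) * J' := by
        rw [antipodeCommMulComul_assoc_symm, antipodeMulLeft_lTensor_comul_eq hJ hε hJJ',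
          ← mul_assoc (1 ⊗ₜ Q), Algebra.TensorProduct.tmul_mul_tmul, one_mul, mul_one, mul_assoc]

lemma comul_eq_of_mul_mulAntipodeRTensor_eq_one (hJ : IsTwistCocycle J)
    (hε : TensorProduct.lid R H (map counit LinearMap.id J) = 1) (hJJ' : J * J' = 1)
    (hJ'J : J' * J = 1) {Q' : H} (hQQ' : mulAntipodeRTensor J * Q' = 1)
    (hQ'Q : Q' * mulAntipodeRTensor J = 1) :
    comul Q' = J * (Q' ⊗ₜ Q') * antipodeComm J := by
  have hΔQ := comul_mulAntipodeRTensor hJ hε hJJ'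
  set Q := mulAntipodeRTensor J
  refine left_inv_eq_right_inv (a := comul Q) ?_ ?_
  · rw [← Bialgebra.comul_mul, hQ'Q, Bialgebra.comul_one]
  · rw [hΔQ]
    calc _ = antipodeComm J' * ((Q ⊗ₜ Q) * (J' * J) * (Q' ⊗ₜ Q')) * antipodeComm J := by
          simp only [mul_assoc]
      _ = antipodeComm J' * antipodeComm J := by
          rw [hJ'J, mul_one, Algebra.TensorProduct.tmul_mul_tmul, hQQ',
            ← Algebra.TensorProduct.one_def, mul_one]
      _ = 1 := by rw [← antipodeComm_mul, hJJ', antipodeComm_one]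

lemma comul_antipode_mul_mulAntipodeRTensor (hJ : IsTwistCocycle J)
    (hε : TensorProduct.lid R H (map counit LinearMap.id J) = 1) (hJJ' : J * J' = 1)
    (hJ'J : J' * J = 1) {Q' : H} (hQQ' : mulAntipodeRTensor J * Q' = 1)
    (hQ'Q : Q' * mulAntipodeRTensor J = 1) :
    comul (antipode R Q' * mulAntipodeRTensor J) =
      Algebra.TensorProduct.map (antipodeSqAlgHom R H) (antipodeSqAlgHom R H) J *
        ((antipode R Q' * mulAntipodeRTensor J) ⊗ₜ (antipode R Q' * mulAntipodeRTensor J)) *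
          J' := by
  have hΔQ := comul_mulAntipodeRTensor hJ hε hJJ'
  have hΔQ' := comul_eq_of_mul_mulAntipodeRTensor_eq_one hJ hε hJJ' hJ'J hQQ' hQ'Q
  set Q := mulAntipodeRTensor J
  have hφ : antipodeComm J * antipodeComm J' = 1 := by
    rw [← antipodeComm_mul, hJ'J, antipodeComm_one]
  rw [Bialgebra.comul_mul, comul_antipode, hΔQ', hΔQ, antipodeComm_mul, antipodeComm_mul,
    antipodeComm_antipodeComm]
  calc _ = Algebra.TensorProduct.map (antipodeSqAlgHom R H) (antipodeSqAlgHom R H) J *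
        (antipodeComm (Q' ⊗ₜ Q') * (antipodeComm J * antipodeComm J') * (Q ⊗ₜ Q)) * J' := by
        simp only [mul_assoc]
    _ = _ := by rw [hφ, mul_one, antipodeComm_tmul, Algebra.TensorProduct.tmul_mul_tmul]

end Hopf

end HopfTwist

end

open HopfTwist

theorem twist_element_grouplike_general (H : Type) [Ring H] [HopfAlgebra ℂ H]
    (J Jinv : H ⊗[ℂ] H) (hJ₁ : J * Jinv = 1) (hJ₂ : Jinv * J = 1)
    (htwist : (Algebra.TensorProduct.assoc ℂ ℂ ℂ H H H)
        ((TensorProduct.map (Coalgebra.comul (R := ℂ)) LinearMap.id) J * (J ⊗ₜ[ℂ] (1 : H)))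
      = (TensorProduct.map LinearMap.id (Coalgebra.comul (R := ℂ))) J * ((1 : H) ⊗ₜ[ℂ] J))
    (hcounit₁ : (TensorProduct.lid ℂ H)
      ((TensorProduct.map (Coalgebra.counit (R := ℂ)) LinearMap.id) J) = 1)
    (Q Qi : H)
    (hQ : Q = LinearMap.mul' ℂ H
      ((TensorProduct.map (HopfAlgebra.antipode (R := ℂ)) LinearMap.id) J))
    (hQQi : Q * Qi = 1) (hQiQ : Qi * Q = 1)
    (n : ℕ)
    (hS2n : (HopfAlgebra.antipode (R := ℂ) (A := H)) ^ (2 * n) = LinearMap.id)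
    (g : H)
    (hg : g = ((List.range n).reverse.map (fun k =>
      ((HopfAlgebra.antipode (R := ℂ) (A := H)) ^ (2 * k + 1)) Qi *
        ((HopfAlgebra.antipode (R := ℂ) (A := H)) ^ (2 * k)) Q)).prod) :
    Coalgebra.counit (R := ℂ) g = 1 ∧
      Coalgebra.comul (R := ℂ) g = J * (g ⊗ₜ[ℂ] g) * Jinv := by
  obtain rfl : Q = mulAntipodeRTensor J := hQ
  set σ := antipodeSqAlgHom ℂ H
  have hg' : g = orbitProd σ (antipode ℂ Qi * mulAntipodeRTensor J) n := by
    refine hg.trans (congrArg List.prod (List.map_congr_left fun k _ => ?_))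
    rw [map_mul, antipodeSqAlgHom_pow_apply, antipodeSqAlgHom_pow_apply, pow_succ,
      Module.End.mul_apply]
  have hσn : σ ^ n = 1 := AlgHom.ext fun x => by rw [antipodeSqAlgHom_pow_apply, hS2n]; rfl
  subst hg'
  refine ⟨counit_orbitProd counit_antipodeSqAlgHom ?_ n, ?_⟩
  · rw [Bialgebra.counit_mul, counit_antipode, ← Bialgebra.counit_mul, hQiQ, Bialgebra.counit_one]
  · rw [comul_orbitProd hJ₁ hJ₂ comul_antipodeSqAlgHom
      (comul_antipode_mul_mulAntipodeRTensor htwist hcounit₁ hJ₁ hJ₂ hQQi hQiQ), ← tensorMap_pow,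
      hσn]
    exact congrArg (· * _ * Jinv) (DFunLike.congr_fun Algebra.TensorProduct.map_id J)

/-- Let `H` be a finite-dimensional Hopf algebra over `ℂ` with antipode `S`, and let
`J ∈ H ⊗ H` be a twist for `H`, i.e. `J` is invertible,
`(Δ⊗Id)(J)·(J⊗1) = (Id⊗Δ)(J)·(1⊗J)` and `(ε⊗Id)(J) = (Id⊗ε)(J) = 1`.
Let `Q = m∘(S⊗Id)(J)`, which is invertible with inverse `Q⁻¹ = m∘(Id⊗S)(J⁻¹)`.
Assume `S^{2n} = Id` for a positive integer `n` and set
`g := S^{2n-1}(Q⁻¹)·S^{2n-2}(Q)·⋯·S³(Q⁻¹)·S²(Q)·S(Q⁻¹)·Q`.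
Then `ε(g) = 1` and `Δ(g) = J·(g⊗g)·J⁻¹`, i.e. `g` is a grouplike element of the twisted
Hopf algebra `H^J`. -/
theorem twist_element_grouplike (H : Type) [Ring H] [HopfAlgebra ℂ H]
    [FiniteDimensional ℂ H]
    (J Jinv : H ⊗[ℂ] H) (hJ₁ : J * Jinv = 1) (hJ₂ : Jinv * J = 1)
    (htwist : (Algebra.TensorProduct.assoc ℂ ℂ ℂ H H H)
        ((TensorProduct.map (Coalgebra.comul (R := ℂ)) LinearMap.id) J * (J ⊗ₜ[ℂ] (1 : H)))
      = (TensorProduct.map LinearMap.id (Coalgebra.comul (R := ℂ))) J * ((1 : H) ⊗ₜ[ℂ] J))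
    (hcounit₁ : (TensorProduct.lid ℂ H)
      ((TensorProduct.map (Coalgebra.counit (R := ℂ)) LinearMap.id) J) = 1)
    (hcounit₂ : (TensorProduct.rid ℂ H)
      ((TensorProduct.map LinearMap.id (Coalgebra.counit (R := ℂ))) J) = 1)
    (Q Qi : H)
    (hQ : Q = LinearMap.mul' ℂ H
      ((TensorProduct.map (HopfAlgebra.antipode (R := ℂ)) LinearMap.id) J))
    (hQi : Qi = LinearMap.mul' ℂ H
      ((TensorProduct.map LinearMap.id (HopfAlgebra.antipode (R := ℂ))) Jinv))
    (hQQi : Q * Qi = 1) (hQiQ : Qi * Q = 1)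
    (n : ℕ) (hn : 0 < n)
    (hS2n : (HopfAlgebra.antipode (R := ℂ) (A := H)) ^ (2 * n) = LinearMap.id)
    (g : H)
    (hg : g = ((List.range n).reverse.map (fun k =>
      ((HopfAlgebra.antipode (R := ℂ) (A := H)) ^ (2 * k + 1)) Qi *
        ((HopfAlgebra.antipode (R := ℂ) (A := H)) ^ (2 * k)) Q)).prod) :
    Coalgebra.counit (R := ℂ) g = 1 ∧
      Coalgebra.comul (R := ℂ) g = J * (g ⊗ₜ[ℂ] g) * Jinv :=
  twist_element_grouplike_general H J Jinv hJ₁ hJ₂ htwist hcounit₁ Q Qi hQ hQQi hQiQ n hS2n g hg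
end
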